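/- For i ≥ 1, let φ_i : B_i → B_{i−1} be the algebra map determined by φ_i(ζ_k) = ζ_{k−1} for all k ≥ 1 (with the convention ζ_0 = 1) and φ_i(τ̄_m) = τ̄_{m−1} for all m ≥ i+1. Then for every j ≥ 0, the restriction of φ_i to M_i(j) is an F_p-linear bijection from M_i(j) onto N_{i−1}(⌊j/p⌋); moreover, for every homogeneous element x ∈ M_i(j), deg(φ_i(x)) = deg(x) − 2(p−1)j, so M_i(j) ≅ Σ^{qj} N_{i−1}(⌊j/p⌋) as graded vector spaces, where q = 2(p−1). -/

import Mathlib

/-- A monomial of `B n = F_p[ζ₁, ζ₂, …] ⊗ Λ(τ̄_{n+1}, τ̄_{n+2}, …)`: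
`e k` is the exponent of `ζ_k` (with `e 0 = 0`, i.e. no `ζ₀`), and
`t` is the set of indices `m` of the exterior generators `τ̄_m` occurring
(all of which satisfy `m ≥ n + 1`). -/
structure Mono (n : ℕ) where
  e : ℕ →₀ ℕ
  t : Finset ℕ
  he : e 0 = 0
  ht : ∀ m ∈ t, n + 1 ≤ m

/-- `B p n` models `A//E(n)_* = F_p[ζ₁, ζ₂, …] ⊗ Λ(τ̄_{n+1}, …)` as the free
`F_p`-vector space on its monomial basis. -/
abbrev B (p n : ℕ) : Type := Mono n →₀ ZMod p

namespace Mono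

variable {n : ℕ}

/-- Internal (topological) degree of a monomial: `deg ζ_k = 2(p^k − 1)`,
`deg τ̄_m = 2p^m − 1`. -/
def deg (p : ℕ) (x : Mono n) : ℕ :=
  x.e.sum (fun k a => a * (2 * (p ^ k - 1))) + ∑ m ∈ x.t, (2 * p ^ m - 1)

/-- Weight of a monomial: `wt ζ_k = wt τ̄_k = p^k`, extended additively. -/
def wt (p : ℕ) (x : Mono n) : ℕ :=
  x.e.sum (fun k a => a * p ^ k) + ∑ m ∈ x.t, p ^ m

/-- Length of a monomial: the number of exterior factors `τ̄_m` occurring in it. -/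
def len (x : Mono n) : ℕ := x.t.card

end Mono

/-- The monomial obtained from `x` by the Milnor operation `Q_r` acting on the
exterior factor `τ̄_m`: remove `τ̄_m` and multiply by `ζ_{m−r}^{p^r}`
(with the convention `ζ₀ = 1`, i.e. if `m ≤ r` nothing is added). -/
noncomputable def Qtarget (p r : ℕ) {n : ℕ} (x : Mono n) (m : ℕ) : Mono n where
  e := if r < m then x.e + Finsupp.single (m - r) (p ^ r) else x.e
  t := x.t.erase m
  he := by
    by_cases h : r < m
    · simp [if_pos h, Finsupp.single_apply, x.he, Nat.sub_ne_zero_of_lt h]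
    · simp [if_neg h, x.he]
  ht := fun m' hm' => x.ht m' (Finset.mem_of_mem_erase hm')

/-- Value of the Milnor operation `Q_r` on a basis monomial: the signed sum over the
exterior factors `τ̄_m` of `x`, the sign being the Koszul sign `(−1)^{#{m' ∈ t, m' < m}}`. -/
noncomputable def Qmono (p r : ℕ) {n : ℕ} (x : Mono n) : B p n :=
  ∑ m ∈ x.t, ((-1 : ZMod p) ^ ((x.t.filter (fun m' => m' < m)).card)) •
    Finsupp.single (Qtarget p r x m) (1 : ZMod p)

/-- The Milnor operation `Q_r : B_n → B_n`, the unique graded derivation with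
`Q_r ζ_k = 0` and `Q_r τ̄_m = ζ_{m−r}^{p^r}`. -/
noncomputable def Qop (p n r : ℕ) : B p n →ₗ[ZMod p] B p n :=
  Finsupp.lsum (ZMod p) fun x => LinearMap.toSpanSingleton (ZMod p) (B p n) (Qmono p r x)

/-- The span of the set of monomials satisfying a predicate `P`. -/
noncomputable def monSpan (p n : ℕ) (P : Mono n → Prop) : Submodule (ZMod p) (B p n) :=
  Submodule.span (ZMod p) ((fun x => Finsupp.single x (1 : ZMod p)) '' {x | P x})

/-- `M_n(j) ⊆ B_n`: the span of the monomials of weight exactly `pj`. -/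
noncomputable def Msub (p n j : ℕ) : Submodule (ZMod p) (B p n) := monSpan p n (fun x => x.wt p = p * j)

/-- `N_n(j) ⊆ B_n`: the `j`-th Brown–Gitler comodule, the span of the monomials of
weight at most `pj`. -/
noncomputable def Nsub (p n j : ℕ) : Submodule (ZMod p) (B p n) := monSpan p n (fun x => x.wt p ≤ p * j)

/-- The effect of `φ_i` on a monomial: `ζ_k ↦ ζ_{k−1}` (with `ζ₀ = 1`) and
`τ̄_m ↦ τ̄_{m−1}`. -/
noncomputable def phiMono {i : ℕ} (hi : 1 ≤ i) (x : Mono i) : Mono (i - 1) where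
  e := (Finsupp.comapDomain (fun k => k + 1) x.e (fun a _ b _ h => by simpa using h)).erase 0
  t := x.t.image (fun m => m - 1)
  he := by simp
  ht := by
    intro m hm
    rcases Finset.mem_image.mp hm with ⟨m', hm', rfl⟩
    have := x.ht m' hm'
    omega

/-- The (ungraded) algebra map `φ_i : B_i → B_{i−1}` with `φ_i(ζ_k) = ζ_{k−1}` and
`φ_i(τ̄_m) = τ̄_{m−1}`, as a linear map. -/
noncomputable def phiMap (p i : ℕ) (hi : 1 ≤ i) : B p i →ₗ[ZMod p] B p (i - 1) :=
  Finsupp.lsum (ZMod p) fun x =>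
    LinearMap.toSpanSingleton (ZMod p) (B p (i - 1)) (Finsupp.single (phiMono hi x) 1)

/-!
Every monomial `x` of `B_i` is `ζ₁ ^ (x.e 1)` times the monomial `φ_i x` with all indices raised
by one, so `wt x = p (x.e 1 + wt (φ_i x))`. On monomials of weight `pj` the map `φ_i` therefore
only forgets `x.e 1 = j - wt (φ_i x)`, so it is injective there, and its image is the set of
monomials of weight at most `j`, i.e. (weights being divisible by `p`) at most `p ⌊j/p⌋`.
A linear map induced by a map of bases that is injective on a set of basis vectors maps their
span isomorphically onto the span of the image. Raising indices by one raises the degree of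
each generator by `q` times its weight, which gives the degree shift.
-/

lemma Finsupp.mapDomain_add_one_apply_zero {M : Type*} [AddCommMonoid M] (f : ℕ →₀ M) :
    f.mapDomain (· + 1) 0 = 0 :=
  Finsupp.mapDomain_of_notMem_range _ 0 (by simp)

namespace Mono

variable {n : ℕ}

lemma ext {x y : Mono n} (he : x.e = y.e) (ht : x.t = y.t) : x = y := by
  cases x; cases y; simp_all

def weightBy (c d : ℕ → ℕ) (x : Mono n) : ℕ :=
  x.e.sum (fun k a => a * c k) + ∑ m ∈ x.t, d m

lemma wt_eq_weightBy (p : ℕ) (x : Mono n) :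
    x.wt p = x.weightBy (fun k => p ^ k) (fun m => p ^ m) := rfl

lemma deg_eq_weightBy (p : ℕ) (x : Mono n) :
    x.deg p = x.weightBy (fun k => 2 * (p ^ k - 1)) (fun m => 2 * p ^ m - 1) := rfl

lemma weightBy_add (c c' d d' : ℕ → ℕ) (x : Mono n) :
    x.weightBy (fun k => c k + c' k) (fun m => d m + d' m) =
      x.weightBy c d + x.weightBy c' d' := by
  simp only [weightBy, mul_add, Finsupp.sum_add, Finset.sum_add_distrib]
  ring

lemma weightBy_const_mul (a : ℕ) (c d : ℕ → ℕ) (x : Mono n) :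
    x.weightBy (fun k => a * c k) (fun m => a * d m) = a * x.weightBy c d := by
  simp only [weightBy, mul_add, Finsupp.mul_sum, Finset.mul_sum, mul_left_comm]

lemma dvd_wt (p : ℕ) (x : Mono n) : p ∣ x.wt p := by
  refine dvd_add (Finset.dvd_sum fun k hk => ?_) (Finset.dvd_sum fun m hm => ?_)
  · have hk0 : k ≠ 0 := fun h => Finsupp.mem_support_iff.mp hk (h ▸ x.he)
    exact (dvd_pow_self p hk0).mul_left _
  · exact dvd_pow_self p (by have := x.ht m hm; omega)

lemma wt_le_mul_div_iff {p : ℕ} (hp : 0 < p) (x : Mono n) (j : ℕ) :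
    x.wt p ≤ p * (j / p) ↔ x.wt p ≤ j := by
  obtain ⟨c, hc⟩ := x.dvd_wt p
  rw [hc, Nat.mul_le_mul_left_iff hp, Nat.le_div_iff_mul_le hp, mul_comm]

/-- `ζ₁ ^ a` times `y` with every index raised by one. -/
noncomputable def shiftUp {i : ℕ} (a : ℕ) (y : Mono (i - 1)) : Mono i where
  e := Finsupp.single 1 a + y.e.mapDomain (· + 1)
  t := y.t.image (· + 1)
  he := by simp [Finsupp.mapDomain_add_one_apply_zero]
  ht := by
    simp only [Finset.mem_image]
    rintro _ ⟨m, hm, rfl⟩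
    have := y.ht m hm
    omega

lemma weightBy_shiftUp {i : ℕ} (a : ℕ) (y : Mono (i - 1)) (c d : ℕ → ℕ) :
    (shiftUp a y).weightBy c d =
      a * c 1 + y.weightBy (fun k => c (k + 1)) (fun m => d (m + 1)) := by
  simp only [weightBy, shiftUp]
  rw [Finsupp.sum_add_index' (fun _ => zero_mul _) (fun _ _ _ => add_mul _ _ _),
    Finsupp.sum_single_index (zero_mul _),
    Finsupp.sum_mapDomain_index (fun _ => zero_mul _) (fun _ _ _ => add_mul _ _ _),
    Finset.sum_image (fun _ _ _ _ h => Nat.succ_injective h), add_assoc]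

lemma wt_shiftUp (p : ℕ) {i : ℕ} (a : ℕ) (y : Mono (i - 1)) :
    (shiftUp a y).wt p = p * (a + y.wt p) := by
  simp only [wt_eq_weightBy, weightBy_shiftUp, pow_succ', weightBy_const_mul]
  ring

end Mono

section Phi

open Mono

variable {p i : ℕ}

lemma phiMono_e_apply (hi : 1 ≤ i) (x : Mono i) (k : ℕ) :
    (phiMono hi x).e k = if k = 0 then 0 else x.e (k + 1) := by
  rcases k with _ | k
  · simp [phiMono]
  · simp [phiMono]
    erw [Finsupp.comapDomain_apply]

lemma phiMono_shiftUp (hi : 1 ≤ i) (a : ℕ) (y : Mono (i - 1)) :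
    phiMono hi (shiftUp a y) = y := by
  refine Mono.ext (Finsupp.ext fun k => ?_) ?_
  · rw [phiMono_e_apply]
    rcases k with _ | k
    · simp [y.he]
    · simp [shiftUp, Finsupp.mapDomain_apply Nat.succ_injective]
  · simp [phiMono, shiftUp, Finset.image_image, Function.comp_def]

lemma shiftUp_phiMono (hi : 1 ≤ i) (x : Mono i) : shiftUp (x.e 1) (phiMono hi x) = x := by
  refine Mono.ext (Finsupp.ext fun k => ?_) ?_
  · rcases k with _ | _ | k
    · simp [shiftUp, x.he, Finsupp.mapDomain_add_one_apply_zero]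
    · simp [shiftUp, Finsupp.mapDomain_apply Nat.succ_injective _ 0, phiMono_e_apply]
    · simp [shiftUp, Finsupp.mapDomain_apply Nat.succ_injective _ (k + 1), phiMono_e_apply]
  · ext m
    simp only [shiftUp, phiMono, Finset.image_image, Function.comp_def, Finset.mem_image]
    constructor
    · rintro ⟨m', hm', rfl⟩
      have := x.ht m' hm'
      rwa [Nat.sub_add_cancel (by omega)]
    · intro hm
      have := x.ht m hm
      exact ⟨m, hm, Nat.sub_add_cancel (by omega)⟩

lemma wt_phiMono (hi : 1 ≤ i) (x : Mono i) : x.wt p = p * (x.e 1 + (phiMono hi x).wt p) := by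
  conv_lhs => rw [← shiftUp_phiMono hi x]
  exact wt_shiftUp p _ _

lemma deg_phiMono (hp : 0 < p) (hi : 1 ≤ i) (x : Mono i) :
    x.deg p = (phiMono hi x).deg p + 2 * (p - 1) * (x.e 1 + (phiMono hi x).wt p) := by
  have hζ : ∀ k, 2 * (p ^ (k + 1) - 1) = 2 * (p ^ k - 1) + 2 * (p - 1) * p ^ k := fun k => by
    have := Nat.one_le_pow k p hp
    zify [this, Nat.one_le_pow (k + 1) p hp, hp]
    ring
  have hτ : ∀ m, 2 * p ^ (m + 1) - 1 = (2 * p ^ m - 1) + 2 * (p - 1) * p ^ m := fun m => by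
    have := Nat.one_le_pow m p hp
    zify [show 1 ≤ 2 * p ^ m by omega, show 1 ≤ 2 * p ^ (m + 1) by
      have := Nat.one_le_pow (m + 1) p hp; omega, hp]
    ring
  conv_lhs => rw [← shiftUp_phiMono hi x, deg_eq_weightBy, weightBy_shiftUp]
  simp only [hζ, hτ, pow_zero, Nat.sub_self, weightBy_add, weightBy_const_mul,
    ← deg_eq_weightBy, ← wt_eq_weightBy]
  ring

lemma e_one_add_wt_phiMono (hp : 0 < p) (hi : 1 ≤ i) {x : Mono i} {j : ℕ}
    (hx : x.wt p = p * j) :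
    x.e 1 + (phiMono hi x).wt p = j :=
  Nat.eq_of_mul_eq_mul_left hp ((wt_phiMono hi x).symm.trans hx)

lemma injOn_phiMono (hp : 0 < p) (hi : 1 ≤ i) (j : ℕ) :
    Set.InjOn (phiMono hi) {x : Mono i | x.wt p = p * j} := by
  intro x hx x' hx' h
  have he : x.e 1 = x'.e 1 := by
    have := e_one_add_wt_phiMono hp hi hx
    have := e_one_add_wt_phiMono hp hi hx'
    rw [h] at *
    omega
  rw [← shiftUp_phiMono hi x, ← shiftUp_phiMono hi x', he, h]

lemma image_phiMono (hp : 0 < p) (hi : 1 ≤ i) (j : ℕ) :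
    phiMono hi '' {x : Mono i | x.wt p = p * j} = {y | y.wt p ≤ p * (j / p)} := by
  ext y
  simp only [Set.mem_image, Set.mem_ofPred, wt_le_mul_div_iff hp]
  constructor
  · rintro ⟨x, hx, rfl⟩
    have := e_one_add_wt_phiMono hp hi hx
    omega
  · intro hy
    refine ⟨shiftUp (j - y.wt p) y, ?_, phiMono_shiftUp hi _ y⟩
    rw [wt_shiftUp, Nat.sub_add_cancel hy]

lemma monSpan_eq_supported (n : ℕ) (P : Mono n → Prop) :
    monSpan p n P = Finsupp.supported (ZMod p) (ZMod p) {x | P x} :=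
  (Finsupp.supported_eq_span_single _ _).symm

lemma phiMap_eq_lmapDomain (hi : 1 ≤ i) :
    phiMap p i hi = Finsupp.lmapDomain (ZMod p) (ZMod p) (phiMono hi) := by
  refine Finsupp.lhom_ext fun x a => ?_
  simp [phiMap, LinearMap.toSpanSingleton_apply, Finsupp.smul_single]

end Phi

theorem M_i_j_iso_suspension_of_BrownGitler_general (p : ℕ) (hp : p.Prime)
    (i : ℕ) (hi : 1 ≤ i) (j : ℕ) :
    Submodule.map (phiMap p i hi) (Msub p i j) = Nsub p (i - 1) (j / p) ∧
    (∀ v ∈ Msub p i j, phiMap p i hi v = 0 → v = 0) ∧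
    (∀ x : Mono i, x.wt p = p * j →
      x.deg p = (phiMono hi x).deg p + 2 * (p - 1) * j) := by
  refine ⟨?_, fun v hv hv0 => ?_, fun x hx => ?_⟩
  · rw [Msub, Nsub, monSpan_eq_supported, monSpan_eq_supported, phiMap_eq_lmapDomain,
      Finsupp.lmapDomain_supported, image_phiMono hp.pos]
  · rw [Msub, monSpan_eq_supported, Finsupp.mem_supported] at hv
    rw [phiMap_eq_lmapDomain, Finsupp.lmapDomain_apply] at hv0
    exact Finsupp.mapDomain_injOn _ (injOn_phiMono hp.pos hi j) hv (by simp)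
      (by rw [hv0, Finsupp.mapDomain_zero])
  · rw [deg_phiMono hp.pos hi x, e_one_add_wt_phiMono hp.pos hi hx]

/-- For `i ≥ 1`, the map `φ_i : B_i → B_{i−1}` restricts to an
`F_p`-linear bijection of `M_i(j)` onto `N_{i−1}(⌊j/p⌋)`, and on a monomial of `M_i(j)`
it lowers the internal degree by exactly `qj` where `q = 2(p−1)`; hence
`M_i(j) ≅ Σ^{qj} N_{i−1}(⌊j/p⌋)` as graded vector spaces. -/
theorem M_i_j_iso_suspension_of_BrownGitler (p : ℕ) (hp : p.Prime) (hodd : Odd p)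
    (i : ℕ) (hi : 1 ≤ i) (j : ℕ) :
    Submodule.map (phiMap p i hi) (Msub p i j) = Nsub p (i - 1) (j / p) ∧
    (∀ v ∈ Msub p i j, phiMap p i hi v = 0 → v = 0) ∧
    (∀ x : Mono i, x.wt p = p * j →
      x.deg p = (phiMono hi x).deg p + 2 * (p - 1) * j) :=
  M_i_j_iso_suspension_of_BrownGitler_general p hp i hi j
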